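/- Fix α > 1. With W_m'(a,b) = -α(m+b+a)^{-(α+1)} + α(m+b)^{-(α+1)} and G_m f_j = Σ_{l=0}^{m-1} f_{j+l}, there exists C > 0 such that whenever ‖η‖_{ℓ²} ≤ 1/4 and ‖r̃‖_{ℓ²} ≤ 1/4, Σ_{m≥1} m·‖W_m'(G_m η, G_m r̃)‖_{ℓ²} ≤ C‖η‖_{ℓ²}. -/

import Mathlib

/-- `W_m'(a,b) = -α(m+b+a)^{-(α+1)} + α(m+b)^{-(α+1)}`. -/
noncomputable def Wm' (α : ℝ) (m : ℕ) (a b : ℝ) : ℝ :=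
  -α * ((m : ℝ) + b + a) ^ (-(α + 1)) + α * ((m : ℝ) + b) ^ (-(α + 1))

/-- `G_m f_j = Σ_{l=0}^{m-1} f_{j+l}`. -/
def Gm (m : ℕ) (f : ℤ → ℝ) (j : ℤ) : ℝ := ∑ l ∈ Finset.range m, f (j + l)



open Real

lemma wm'_bound (α : ℝ) (hα : 1 < α) (m : ℕ) (hm : 1 ≤ m) (a b : ℝ)
    (ha : |a| ≤ (m : ℝ) / 4) (hb : |b| ≤ (m : ℝ) / 4) :
    |Wm' α m a b| ≤ (2 ^ (α + 2) * (α * (α + 1))) * (m : ℝ) ^ (-(α + 2)) * |a| := by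
  set M : ℝ := (m : ℝ) with hM
  have hM1 : 1 ≤ M := by rw [hM]; exact_mod_cast hm
  have hM0 : 0 < M := by linarith
  have hM2 : 0 < M / 2 := by linarith
  obtain ⟨ha1, ha2⟩ := abs_le.1 ha
  obtain ⟨hb1, hb2⟩ := abs_le.1 hb
  set s : Set ℝ := Set.Ici (M / 2) with hs
  set g : ℝ → ℝ := fun x => α * x ^ (-(α + 1)) with hg
  set g' : ℝ → ℝ := fun x => α * (-(α + 1) * x ^ (-(α + 1) - 1)) with hg'
  set C : ℝ := (2 ^ (α + 2) * (α * (α + 1))) * M ^ (-(α + 2)) with hC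
  have hderiv : ∀ x ∈ s, HasDerivWithinAt g (g' x) s x := by
    intro x hx
    have hx0 : x ≠ 0 := by
      have h : M / 2 ≤ x := hx
      nlinarith
    exact ((Real.hasDerivAt_rpow_const (Or.inl hx0)).const_mul α).hasDerivWithinAt
  have hbound : ∀ x ∈ s, ‖g' x‖ ≤ C := by
    intro x hx
    have hxM : M / 2 ≤ x := hx
    have hx0 : 0 < x := lt_of_lt_of_le hM2 hxM
    have he : -(α + 1) - 1 = -(α + 2) := by ring
    have h1 : ‖g' x‖ = α * (α + 1) * x ^ (-(α + 2)) := by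
      rw [hg']
      rw [he, Real.norm_eq_abs, abs_mul, abs_mul]
      rw [abs_of_pos (by linarith : (0:ℝ) < α), abs_of_nonpos (by linarith : -(α+1) ≤ 0),
        abs_of_nonneg (Real.rpow_nonneg hx0.le _)]
      ring
    rw [h1, hC]
    have h2 : x ^ (-(α + 2)) ≤ (M / 2) ^ (-(α + 2)) :=
      Real.rpow_le_rpow_of_nonpos hM2 hxM (by linarith)
    have h3 : (M / 2) ^ (-(α + 2)) = 2 ^ (α + 2) * M ^ (-(α + 2)) := by
      rw [Real.div_rpow hM0.le (by norm_num), Real.rpow_neg (by norm_num : (0:ℝ) ≤ 2)]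
      rw [div_inv_eq_mul]
      ring
    calc α * (α + 1) * x ^ (-(α + 2)) ≤ α * (α + 1) * ((M / 2) ^ (-(α + 2))) := by
          apply mul_le_mul_of_nonneg_left h2 (by nlinarith)
      _ = 2 ^ (α + 2) * (α * (α + 1)) * M ^ (-(α + 2)) := by rw [h3]; ring
  have hx : (M + b) ∈ s := by
    simp only [hs, Set.mem_Ici]; linarith
  have hy : (M + b + a) ∈ s := by
    simp only [hs, Set.mem_Ici]; linarith
  have := (convex_Ici (M / 2)).norm_image_sub_le_of_norm_hasDerivWithin_le hderiv hbound hx hy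
  have heq : Wm' α m a b = -(g (M + b + a) - g (M + b)) := by
    simp only [Wm', hg, hM]; ring
  rw [heq, abs_neg]
  calc |g (M + b + a) - g (M + b)| ≤ C * ‖M + b + a - (M + b)‖ := this
    _ = C * |a| := by congr 1; rw [Real.norm_eq_abs]; ring_nf

lemma two_toReal : ((2 : ENNReal)).toReal = (2 : ℝ) := by norm_num

lemma norm_sq_rpow (x : ℝ) : ‖x‖ ^ ((2 : ENNReal)).toReal = x ^ 2 := by
  rw [two_toReal, show (2:ℝ) = ((2:ℕ):ℝ) by norm_num, Real.rpow_natCast,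
    Real.norm_eq_abs, sq_abs]

lemma lp_norm_eq (x : lp (fun _ : ℤ => ℝ) 2) : ‖x‖ = Real.sqrt (∑' j, (x j) ^ 2) := by
  have h1 : ∑' j, ‖x j‖ ^ ((2 : ENNReal)).toReal = ∑' j, (x j) ^ 2 :=
    tsum_congr fun j => norm_sq_rpow (x j)
  rw [lp.norm_eq_tsum_rpow (by norm_num) x, h1, two_toReal, Real.sqrt_eq_rpow]

lemma memℓp_two_iff (f : ℤ → ℝ) : Memℓp f 2 ↔ Summable fun j => f j ^ 2 := by
  rw [memℓp_gen_iff (by norm_num)]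
  exact summable_congr fun j => norm_sq_rpow (f j)

lemma memℓp_shift {η : ℤ → ℝ} (hη : Memℓp η 2) (l : ℤ) :
    Memℓp (fun j => η (j + l)) 2 := by
  rw [memℓp_two_iff] at hη ⊢
  exact ((Equiv.addRight l).summable_iff (f := fun j : ℤ => η j ^ 2)).2 hη

noncomputable def shiftlp (η : ℤ → ℝ) (hη : Memℓp η 2) (l : ℤ) : lp (fun _ : ℤ => ℝ) 2 :=
  ⟨fun j => η (j + l), memℓp_shift hη l⟩

lemma shiftlp_norm (η : ℤ → ℝ) (hη : Memℓp η 2) (l : ℤ) :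
    ‖shiftlp η hη l‖ = Real.sqrt (∑' j, η j ^ 2) := by
  rw [lp_norm_eq]
  congr 1
  exact (Equiv.addRight l).tsum_eq (fun j => η j ^ 2)

noncomputable def Gmlp (η : ℤ → ℝ) (hη : Memℓp η 2) (m : ℕ) : lp (fun _ : ℤ => ℝ) 2 :=
  ∑ l ∈ Finset.range m, shiftlp η hη l

lemma Gmlp_apply (η : ℤ → ℝ) (hη : Memℓp η 2) (m : ℕ) (j : ℤ) :
    (Gmlp η hη m) j = Gm m η j := by
  rw [Gmlp, lp.coeFn_sum]
  simp [Gm, shiftlp]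

lemma Gmlp_norm_le (η : ℤ → ℝ) (hη : Memℓp η 2) (m : ℕ) :
    ‖Gmlp η hη m‖ ≤ m * Real.sqrt (∑' j, η j ^ 2) := by
  calc ‖Gmlp η hη m‖ ≤ ∑ l ∈ Finset.range m, ‖shiftlp η hη (l : ℤ)‖ :=
        norm_sum_le _ _
    _ = m * Real.sqrt (∑' j, η j ^ 2) := by
        simp [shiftlp_norm]

lemma pointwise_le_sqrt {η : ℤ → ℝ} (hη : Memℓp η 2) (j : ℤ) :
    |η j| ≤ Real.sqrt (∑' k, η k ^ 2) := by
  have hs : Summable fun k => η k ^ 2 := (memℓp_two_iff η).1 hη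
  have h1 : η j ^ 2 ≤ ∑' k, η k ^ 2 := Summable.le_tsum hs j fun _ _ => sq_nonneg _
  calc |η j| = Real.sqrt (η j ^ 2) := (Real.sqrt_sq_eq_abs _).symm
    _ ≤ _ := Real.sqrt_le_sqrt h1

lemma Gm_pointwise {η : ℤ → ℝ} (hη : Memℓp η 2) (m : ℕ) (j : ℤ) :
    |Gm m η j| ≤ m * Real.sqrt (∑' k, η k ^ 2) := by
  calc |Gm m η j| ≤ ∑ l ∈ Finset.range m, |η (j + l)| := by
        exact Finset.abs_sum_le_sum_abs _ _
    _ ≤ ∑ l ∈ Finset.range m, Real.sqrt (∑' k, η k ^ 2) :=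
        Finset.sum_le_sum fun l _ => pointwise_le_sqrt hη _
    _ = m * Real.sqrt (∑' k, η k ^ 2) := by simp

lemma inner_bound (α : ℝ) (hα : 1 < α) (η r : ℤ → ℝ) (hη : Memℓp η 2) (hr : Memℓp r 2)
    (hη4 : Real.sqrt (∑' j, η j ^ 2) ≤ 1 / 4) (hr4 : Real.sqrt (∑' j, r j ^ 2) ≤ 1 / 4)
    (m : ℕ) (hm : 1 ≤ m) :
    Real.sqrt (∑' j, (Wm' α m (Gm m η j) (Gm m r j)) ^ 2)
      ≤ (2 ^ (α + 2) * (α * (α + 1))) * (m : ℝ) ^ (-(α + 2))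
        * ((m : ℝ) * Real.sqrt (∑' j, η j ^ 2)) := by
  set K : ℝ := 2 ^ (α + 2) * (α * (α + 1)) with hK
  have hK0 : 0 ≤ K := by
    have h2 : (0:ℝ) < 2 ^ (α + 2) := Real.rpow_pos_of_pos (by norm_num) _
    have h3 : (0:ℝ) < α * (α + 1) := by nlinarith
    rw [hK]
    positivity
  set c : ℝ := K * (m : ℝ) ^ (-(α + 2)) with hc
  have hc0 : 0 ≤ c := mul_nonneg hK0 (Real.rpow_nonneg (Nat.cast_nonneg m) _)
  have hm0 : (0:ℝ) ≤ (m : ℝ) := Nat.cast_nonneg m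
  have hsη : 0 ≤ Real.sqrt (∑' j, η j ^ 2) := Real.sqrt_nonneg _
  -- pointwise bound
  have hpt : ∀ j, |Wm' α m (Gm m η j) (Gm m r j)| ≤ c * |Gm m η j| := by
    intro j
    apply wm'_bound α hα m hm
    · calc |Gm m η j| ≤ m * Real.sqrt (∑' k, η k ^ 2) := Gm_pointwise hη m j
        _ ≤ (m : ℝ) * (1/4) := by nlinarith
        _ = (m : ℝ) / 4 := by ring
    · calc |Gm m r j| ≤ m * Real.sqrt (∑' k, r k ^ 2) := Gm_pointwise hr m j
        _ ≤ (m : ℝ) * (1/4) := by nlinarith [Real.sqrt_nonneg (∑' j, r j ^ 2)]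
        _ = (m : ℝ) / 4 := by ring
  have hsqle : ∀ j, (Wm' α m (Gm m η j) (Gm m r j)) ^ 2 ≤ c ^ 2 * (Gm m η j) ^ 2 := by
    intro j
    have h1 : |Wm' α m (Gm m η j) (Gm m r j)| ^ 2 ≤ (c * |Gm m η j|) ^ 2 := by
      apply pow_le_pow_left₀ (abs_nonneg _) (hpt j)
    rwa [sq_abs, mul_pow, sq_abs] at h1
  have hGsum : Summable fun j => (Gm m η j) ^ 2 := by
    have := (memℓp_two_iff _).1 (Gmlp η hη m).property
    refine this.congr fun j => ?_
    rw [Gmlp_apply]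
  have hWsum : Summable fun j => (Wm' α m (Gm m η j) (Gm m r j)) ^ 2 :=
    Summable.of_nonneg_of_le (fun j => sq_nonneg _) hsqle (hGsum.mul_left _)
  have htsum : ∑' j, (Wm' α m (Gm m η j) (Gm m r j)) ^ 2
      ≤ c ^ 2 * ∑' j, (Gm m η j) ^ 2 := by
    rw [← tsum_mul_left]
    exact Summable.tsum_le_tsum hsqle hWsum (hGsum.mul_left _)
  have hGnorm : Real.sqrt (∑' j, (Gm m η j) ^ 2) ≤ (m : ℝ) * Real.sqrt (∑' j, η j ^ 2) := by
    have h1 : Real.sqrt (∑' j, (Gm m η j) ^ 2) = ‖Gmlp η hη m‖ := by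
      rw [lp_norm_eq]
      congr 1
      exact tsum_congr fun j => by rw [Gmlp_apply]
    rw [h1]
    exact Gmlp_norm_le η hη m
  calc Real.sqrt (∑' j, (Wm' α m (Gm m η j) (Gm m r j)) ^ 2)
      ≤ Real.sqrt (c ^ 2 * ∑' j, (Gm m η j) ^ 2) := Real.sqrt_le_sqrt htsum
    _ = c * Real.sqrt (∑' j, (Gm m η j) ^ 2) := by
        rw [Real.sqrt_mul (sq_nonneg c), Real.sqrt_sq hc0]
    _ ≤ c * ((m : ℝ) * Real.sqrt (∑' j, η j ^ 2)) :=
        mul_le_mul_of_nonneg_left hGnorm hc0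

theorem stmt_19 (α : ℝ) (hα : 1 < α) :
    ∃ C > (0 : ℝ), ∀ η r : ℤ → ℝ, Memℓp η 2 → Memℓp r 2 →
      Real.sqrt (∑' j : ℤ, η j ^ 2) ≤ 1 / 4 →
      Real.sqrt (∑' j : ℤ, r j ^ 2) ≤ 1 / 4 →
      (∑' m : ℕ, ((m : ℝ) + 1) *
          Real.sqrt (∑' j : ℤ, (Wm' α (m + 1) (Gm (m + 1) η j) (Gm (m + 1) r j)) ^ 2))
        ≤ C * Real.sqrt (∑' j : ℤ, η j ^ 2) := by
  set K : ℝ := 2 ^ (α + 2) * (α * (α + 1)) with hK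
  have hK0 : 0 ≤ K := by
    have h2 : (0:ℝ) < 2 ^ (α + 2) := Real.rpow_pos_of_pos (by norm_num) _
    have h3 : (0:ℝ) < α * (α + 1) := by nlinarith
    rw [hK]; positivity
  have hSsum : Summable (fun m : ℕ => ((m : ℝ) + 1) ^ (-α)) := by
    have h1 : Summable (fun n : ℕ => (n : ℝ) ^ (-α)) :=
      Real.summable_nat_rpow.2 (by linarith)
    have h2 := h1.comp_injective Nat.succ_injective
    refine h2.congr fun m => ?_
    simp [Nat.succ_eq_add_one]
  set S : ℝ := ∑' m : ℕ, ((m : ℝ) + 1) ^ (-α) with hS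
  have hS0 : 0 ≤ S := tsum_nonneg fun m => Real.rpow_nonneg (by positivity) _
  refine ⟨K * S + 1, by positivity, ?_⟩
  intro η r hη hr hη4 hr4
  set s : ℝ := Real.sqrt (∑' j : ℤ, η j ^ 2) with hs
  have hs0 : 0 ≤ s := Real.sqrt_nonneg _
  -- termwise bound
  have hterm : ∀ m : ℕ, ((m : ℝ) + 1) *
      Real.sqrt (∑' j : ℤ, (Wm' α (m + 1) (Gm (m + 1) η j) (Gm (m + 1) r j)) ^ 2)
      ≤ (K * s) * (((m : ℝ) + 1) ^ (-α)) := by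
    intro m
    set M : ℝ := ((m : ℝ) + 1) with hMdef
    have hMcast : M = ((m + 1 : ℕ) : ℝ) := by push_cast [hMdef]; ring
    have hM0 : (0:ℝ) < M := by rw [hMdef]; positivity
    have h1 := inner_bound α hα η r hη hr hη4 hr4 (m + 1) (Nat.le_add_left 1 m)
    rw [← hK, ← hMcast, ← hs] at h1
    have h2 : M * (K * M ^ (-(α + 2)) * (M * s)) = (K * s) * (M ^ (-α)) := by
      have h3 : M ^ (-(α + 2)) * M ^ (1:ℝ) * M ^ (1:ℝ) = M ^ (-α) := by
        rw [← Real.rpow_add hM0, ← Real.rpow_add hM0]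
        congr 1
        ring
      calc M * (K * M ^ (-(α + 2)) * (M * s))
          = (K * s) * (M ^ (-(α + 2)) * M ^ (1:ℝ) * M ^ (1:ℝ)) := by
            rw [Real.rpow_one]; ring
        _ = (K * s) * (M ^ (-α)) := by rw [h3]
    rw [← h2]
    exact mul_le_mul_of_nonneg_left h1 (by linarith)
  have hgsum : Summable (fun m : ℕ => (K * s) * (((m : ℝ) + 1) ^ (-α))) :=
    hSsum.mul_left _
  have hfsum : Summable (fun m : ℕ => ((m : ℝ) + 1) *
      Real.sqrt (∑' j : ℤ, (Wm' α (m + 1) (Gm (m + 1) η j) (Gm (m + 1) r j)) ^ 2)) := by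
    apply Summable.of_nonneg_of_le (fun m => ?_) hterm hgsum
    have : (0:ℝ) ≤ (m : ℝ) + 1 := by positivity
    exact mul_nonneg this (Real.sqrt_nonneg _)
  calc (∑' m : ℕ, ((m : ℝ) + 1) *
          Real.sqrt (∑' j : ℤ, (Wm' α (m + 1) (Gm (m + 1) η j) (Gm (m + 1) r j)) ^ 2))
      ≤ ∑' m : ℕ, (K * s) * (((m : ℝ) + 1) ^ (-α)) := Summable.tsum_le_tsum hterm hfsum hgsum
    _ = (K * s) * S := by rw [tsum_mul_left, ← hS]
    _ ≤ (K * S + 1) * s := by nlinarith
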